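/- Suppose the washing-machine constraints hold on a finite window W = {a,...,b}: x(t) ∈ {0,1} for t ∈ W, x(t) = 0 outside W, x(t) − x(t−1) = z(t) − y(t) on W ∪ {b+1}, z(t) ≤ x(t), y(t) + x(t) ≤ 1, z, y ∈ {0,1}, Σ_{t∈W} z(t) ≤ 1, Σ_{t∈W} y(t) ≤ 1, and Σ_{t∈W} x(t) = k ≥ 1. Then the set {t ∈ W : x(t) = 1} is a contiguous interval of length k, i.e., there exists s with a ≤ s and s + k − 1 ≤ b such that x(t) = 1 iff s ≤ t ≤ s + k − 1. -/

import Mathlib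

open Finset

/-!
Let `S` be the set of ON periods. A period `t ∈ S` with `t - 1 ∉ S` is a start-up, and the
recurrence `x t - x (t - 1) = z t - y t` with binary `y, z` forces `z t = 1` there. Since
`z ≥ 0` and `∑ z ≤ 1`, there is at most one start-up, namely `min S`; a finite set of integers
whose only left endpoint is its minimum is the interval `[min S, max S]`, and `#S = ∑ x = k`
fixes its length.
-/

theorem Finset.eq_Icc_min'_max'_of_sub_one_mem {S : Finset ℤ} (hS : S.Nonempty)
    (h : ∀ t ∈ S, t ≠ S.min' hS → t - 1 ∈ S) : S = Icc (S.min' hS) (S.max' hS) := by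
  have hdown : ∀ n : ℕ, S.min' hS ≤ S.max' hS - n → S.max' hS - n ∈ S := by
    intro n
    induction n with
    | zero => simpa using fun _ => S.max'_mem hS
    | succ n ih =>
      intro hn
      have := h _ (ih (by omega)) (by omega)
      rwa [Nat.cast_succ, ← sub_sub]
  ext t
  refine ⟨fun ht => mem_Icc.2 ⟨S.min'_le t ht, S.le_max' t ht⟩, fun ht => ?_⟩
  obtain ⟨hst, hte⟩ := mem_Icc.1 ht
  have := hdown (S.max' hS - t).toNat (by omega)
  rwa [Int.toNat_of_nonneg (by omega), sub_sub_cancel] at this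

theorem Finset.eq_of_sum_le_one {ι R : Type*} [Semiring R] [PartialOrder R]
    [IsStrictOrderedRing R] {s : Finset ι} {f : ι → R} (hf : ∀ i ∈ s, 0 ≤ f i)
    (hsum : ∑ i ∈ s, f i ≤ 1) {u v : ι} (hu : u ∈ s) (hv : v ∈ s) (hfu : f u = 1)
    (hfv : f v = 1) : u = v := by
  classical
  by_contra hne
  have hpair := sum_le_sum_of_subset_of_nonneg (insert_subset hu (singleton_subset_iff.2 hv))
    fun i hi _ => hf i hi
  rw [sum_pair hne, hfu, hfv] at hpair
  exact absurd (hpair.trans hsum) (by simpa using (zero_lt_one' R).not_ge)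

theorem Finset.sum_eq_card_filter_eq_one {ι R : Type*} [AddCommMonoidWithOne R]
    [DecidableEq R] {s : Finset ι} {f : ι → R} (hf : ∀ i ∈ s, f i = 0 ∨ f i = 1) :
    ∑ i ∈ s, f i = #(s.filter (f · = 1)) := by
  rw [← sum_boole]
  refine sum_congr rfl fun i hi => ?_
  rcases hf i hi with h | h <;> simp [h]

theorem stmt_6_general (a b k : ℤ) (hk : 1 ≤ k)
    (x y z : ℤ → ℤ)
    (hx01 : ∀ t ∈ Finset.Icc a b, x t = 0 ∨ x t = 1)
    (hxout : ∀ t, t ∉ Finset.Icc a b → x t = 0)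
    (hy01 : ∀ t ∈ Finset.Icc a (b + 1), y t = 0 ∨ y t = 1)
    (hz01 : ∀ t ∈ Finset.Icc a (b + 1), z t = 0 ∨ z t = 1)
    (hrec : ∀ t ∈ Finset.Icc a (b + 1), x t - x (t - 1) = z t - y t)
    (hzsum : ∑ t ∈ Finset.Icc a b, z t ≤ 1)
    (hxsum : ∑ t ∈ Finset.Icc a b, x t = k) :
    ∃ s : ℤ, a ≤ s ∧ s + k - 1 ≤ b ∧
      ∀ t ∈ Finset.Icc a b, (x t = 1 ↔ s ≤ t ∧ t ≤ s + k - 1) := by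
  set S := (Icc a b).filter (x · = 1)
  have hwiden : ∀ t ∈ Icc a b, t ∈ Icc a (b + 1) := fun t ht => by
    rw [mem_Icc] at ht ⊢; omega
  have hcard : (#S : ℤ) = k := hxsum ▸ (sum_eq_card_filter_eq_one hx01).symm
  have hS : S.Nonempty := card_pos.1 (by omega)
  have hstartup : ∀ t ∈ S, t - 1 ∉ S → z t = 1 := by
    intro t ht hprev
    obtain ⟨htW, hxt⟩ := mem_filter.1 ht
    have hxprev : x (t - 1) = 0 := by
      by_cases hW : t - 1 ∈ Icc a b
      · exact (hx01 _ hW).resolve_right fun h => hprev (mem_filter.2 ⟨hW, h⟩)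
      · exact hxout _ hW
    have := hrec t (hwiden t htW)
    rcases hz01 t (hwiden t htW) with h | h <;> rcases hy01 t (hwiden t htW) with h' | h' <;> omega
  have hz0 : ∀ t ∈ Icc a b, 0 ≤ z t := fun t ht => by
    rcases hz01 t (hwiden t ht) with h | h <;> omega
  have hsS := S.min'_mem hS
  have hinterval : S = Icc (S.min' hS) (S.max' hS) := by
    refine eq_Icc_min'_max'_of_sub_one_mem hS fun t ht hne => by_contra fun hprev => hne ?_
    refine eq_of_sum_le_one hz0 hzsum (filter_subset _ _ ht) (filter_subset _ _ hsS)
      (hstartup t ht hprev) (hstartup _ hsS fun h => ?_)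
    exact absurd (S.min'_le _ h) (by omega)
  have hlen : S.max' hS = S.min' hS + k - 1 := by
    have := S.min'_le _ (S.max'_mem hS)
    rw [hinterval, Int.card_Icc] at hcard
    omega
  have heW := mem_Icc.1 (filter_subset _ _ (S.max'_mem hS))
  refine ⟨S.min' hS, (mem_Icc.1 (filter_subset _ _ hsS)).1, hlen ▸ heW.2, fun t ht => ?_⟩
  rw [← hlen, ← mem_Icc, ← hinterval, mem_filter]
  exact (and_iff_right ht).symm

/-- The start-up/shut-down washing-machine constraints on a window `W = {a,…,b}`
force the ON periods to form a single contiguous block of length `k`. -/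
theorem stmt_6 (a b k : ℤ) (hab : a ≤ b) (hk : 1 ≤ k)
    (x y z : ℤ → ℤ)
    (hx01 : ∀ t ∈ Finset.Icc a b, x t = 0 ∨ x t = 1)
    (hxout : ∀ t, t ∉ Finset.Icc a b → x t = 0)
    (hy01 : ∀ t ∈ Finset.Icc a (b + 1), y t = 0 ∨ y t = 1)
    (hz01 : ∀ t ∈ Finset.Icc a (b + 1), z t = 0 ∨ z t = 1)
    (hrec : ∀ t ∈ Finset.Icc a (b + 1), x t - x (t - 1) = z t - y t)
    (hzx : ∀ t ∈ Finset.Icc a b, z t ≤ x t)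
    (hyx : ∀ t ∈ Finset.Icc a b, y t + x t ≤ 1)
    (hzsum : ∑ t ∈ Finset.Icc a b, z t ≤ 1)
    (hysum : ∑ t ∈ Finset.Icc a b, y t ≤ 1)
    (hxsum : ∑ t ∈ Finset.Icc a b, x t = k) :
    ∃ s : ℤ, a ≤ s ∧ s + k - 1 ≤ b ∧
      ∀ t ∈ Finset.Icc a b, (x t = 1 ↔ s ≤ t ∧ t ≤ s + k - 1) :=
  stmt_6_general a b k hk x y z hx01 hxout hy01 hz01 hrec hzsum hxsum
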